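/- arXiv:1605.02994 — 2 statements merged into one kernel-verified Lean document; each statement's English description precedes it below -/
import Mathlib

section
/- Fix an integer k ≥ 3. There exists a constant C > 0 such that for every N ≥ 2 there is a finite set S of functions [N] → ℝ with: (i) |v(a)| ≤ C for every v ∈ S and a ∈ [N]; (ii) |S| ≤ exp(C·N^{1−1/(k−1)}); and (iii) for every f : [N] → {0,1}, the normalized gradient (1/N)·∇T_k(f) lies in the convex hull of S. -/
/-!
Fix `q ≈ N^(1/(k-1))` and distinct primes `m_0 < ⋯ < m_(k-1)` in `(q, 2^k q]`. Split the `i`-th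
summand of `∇T_k(f)(a) = ∑_b ∑_i ∏_(j ≠ i) f(a + (j - i) b)` according to the residues `γ_j` of
the terms `a + (j - i) b` modulo `m_j`, `j ≠ i`: there are `O_k(N)` such cells `(i, γ)`. Within a
cell the residues determine `b` modulo `∏_(j ≠ i) m_j ≥ N` (Chinese remainder theorem), so a cell
contributes at most `3` to each coordinate; and it only sees `f` on `k` residue classes of `[N]`,
a set of size `O(N / q) = O(N^(1 - 1/(k-1)))`. Hence `∇T_k(f) / N` is a sub-average, with weights
`1 / O(N)`, of vectors from a catalog of size `O(N) · 2^(O(N^(1 - 1/(k-1))))`.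
-/

noncomputable section

/-- Gradient of the k-AP counting function at f : ℤ → ℝ (f vanishing outside [1,N]):
∇T_k(f)(a) = Σ_b Σ_{i<k} Π_{j<k, j≠i} f(a+(j−i)b). -/
def gradTkInt (k N : ℕ) (f : ℤ → ℝ) (a : ℤ) : ℝ :=
  ∑ b ∈ Finset.Icc (-(N : ℤ)) (N : ℤ), ∑ i ∈ Finset.range k,
    ∏ j ∈ (Finset.range k).erase i, f (a + ((j : ℤ) - (i : ℤ)) * b)

open Finset

theorem Int.card_le_toNat_ediv_add_one_of_modEq {s : Finset ℤ} {lo hi M : ℤ} (hM : 0 < M)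
    (hs : s ⊆ Icc lo hi) (hmod : ∀ x ∈ s, ∀ y ∈ s, x ≡ y [ZMOD M]) :
    #s ≤ ((hi - lo) / M).toNat + 1 := by
  have hmaps : ∀ x ∈ s, (x - lo) / M ∈ Icc 0 ((hi - lo) / M) := fun x hx => by
    obtain ⟨hlo, hhi⟩ := mem_Icc.1 (hs hx)
    exact mem_Icc.2 ⟨Int.ediv_nonneg (by omega) hM.le, Int.ediv_le_ediv hM (by omega)⟩
  have hinj : Set.InjOn (fun x => (x - lo) / M) s := fun x hx y hy hxy => by
    have hr : (x - lo) % M = (y - lo) % M := ((hmod x hx y hy).sub_right lo)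
    have hx' := Int.mul_ediv_add_emod (x - lo) M
    have hy' := Int.mul_ediv_add_emod (y - lo) M
    simp only at hxy
    rw [hxy, hr] at hx'
    omega
  have := card_le_card_of_injOn _ hmaps hinj
  rw [Int.card_Icc] at this
  omega

theorem Int.card_filter_Icc_modEq_le {m : ℕ} (hm : 0 < m) (N : ℕ) (r : ℤ) :
    #{x ∈ Icc (1 : ℤ) N | x ≡ r [ZMOD m]} ≤ N / m + 1 := by
  have hcard := Int.card_le_toNat_ediv_add_one_of_modEq
    (s := {x ∈ Icc (1 : ℤ) N | x ≡ r [ZMOD m]}) (M := m) (by positivity)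
    (filter_subset _ _) fun x hx y hy =>
      Int.ModEq.trans (mem_filter.1 hx).2 (mem_filter.1 hy).2.symm
  have : ((N : ℤ) - 1) / m ≤ N / m := Int.ediv_le_ediv (by positivity) (by omega)
  have : (0 : ℤ) ≤ N / m := by positivity
  omega

theorem Int.sum_Ico_ite_modEq {R : Type*} [AddCommMonoid R] {m : ℤ} (hm : 0 < m) (p : ℤ)
    (y : R) :
    ∑ v ∈ Ico 0 m, (if p ≡ v [ZMOD m] then y else 0) = y := by
  have hmem : p % m ∈ Ico 0 m := mem_Ico.2 ⟨Int.emod_nonneg _ hm.ne', Int.emod_lt_of_pos _ hm⟩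
  rw [sum_eq_single_of_mem _ hmem fun v hv hne => if_neg fun h => hne ?_,
    if_pos (Int.mod_modEq p m).symm]
  obtain ⟨hv0, hvm⟩ := mem_Ico.1 hv
  rw [show p % m = v % m from h, Int.emod_eq_of_lt hv0 hvm]

theorem Int.ModEq.cancel_left_of_natAbs_lt {p : ℕ} (hp : p.Prime) {c a b : ℤ} (hc0 : c ≠ 0)
    (hcp : c.natAbs < p) (h : c * a ≡ c * b [ZMOD p]) : a ≡ b [ZMOD p] := by
  rw [Int.modEq_iff_dvd, ← mul_sub] at h
  rw [Int.modEq_iff_dvd]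
  refine ((Nat.prime_iff_prime_int.1 hp).dvd_mul.1 h).resolve_left fun hc => ?_
  exact hcp.not_ge (Nat.le_of_dvd (Int.natAbs_pos.2 hc0) (Int.natCast_dvd.1 hc))

theorem sum_smul_mem_convexHull_of_zero_mem {𝕜 E ι : Type*} [Field 𝕜] [LinearOrder 𝕜]
    [IsStrictOrderedRing 𝕜] [AddCommGroup E] [Module 𝕜 E] {S : Set E} (h0 : 0 ∈ S)
    {s : Finset ι} {w : ι → 𝕜} {z : ι → E} (hw₀ : ∀ i ∈ s, 0 ≤ w i) (hw₁ : ∑ i ∈ s, w i ≤ 1)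
    (hz : ∀ i ∈ s, z i ∈ S) : ∑ i ∈ s, w i • z i ∈ convexHull 𝕜 S := by
  rcases (sum_nonneg hw₀).eq_or_lt with hW | hW
  · have hw : ∀ i ∈ s, w i = 0 := (sum_eq_zero_iff_of_nonneg hw₀).1 hW.symm
    rw [sum_eq_zero fun i hi => by rw [hw i hi, zero_smul]]
    exact subset_convexHull 𝕜 S h0
  have hmass : ∑ i ∈ s, w i • z i = (∑ i ∈ s, w i) • s.centerMass w z := by
    rw [centerMass, smul_smul, mul_inv_cancel₀ hW.ne', one_smul]
  rw [hmass]
  exact (convex_convexHull 𝕜 S).smul_mem_of_zero_mem (subset_convexHull 𝕜 S h0)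
    (s.centerMass_mem_convexHull hw₀ hW hz) ⟨hW.le, hw₁⟩

namespace GradTk

/-- `q ≈ N^(1/(k-1))`, kept above `k` so that the primes built from it exceed every
difference `j - i` of indices below `k`. -/
def rootScale (k N : ℕ) : ℕ := max (k + 1) ⌈(N : ℝ) ^ ((1 : ℝ) / ((k : ℝ) - 1))⌉₊

theorem rootScale_pos (k N : ℕ) : 0 < rootScale k N := lt_max_of_lt_left k.succ_pos

/-- The dyadic ranges `(2^j q, 2^(j+1) q]` keep the moduli distinct, while the product of any
`k - 1` of them stays between `N` and `O_k(N)`. -/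
def modulus (k N j : ℕ) : ℕ :=
  (Nat.exists_prime_lt_and_le_two_mul (2 ^ j * rootScale k N)
    (mul_pos (by positivity) (rootScale_pos k N)).ne').choose

theorem modulus_spec (k N j : ℕ) : (modulus k N j).Prime ∧
    2 ^ j * rootScale k N < modulus k N j ∧ modulus k N j ≤ 2 ^ (j + 1) * rootScale k N := by
  obtain ⟨hp, hlt, hle⟩ := (Nat.exists_prime_lt_and_le_two_mul (2 ^ j * rootScale k N)
    (mul_pos (by positivity) (rootScale_pos k N)).ne').choose_spec
  exact ⟨hp, hlt, hle.trans_eq (by ring)⟩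

theorem modulus_prime (k N j : ℕ) : (modulus k N j).Prime := (modulus_spec k N j).1

theorem rootScale_lt_modulus (k N j : ℕ) : rootScale k N < modulus k N j :=
  (Nat.le_mul_of_pos_left _ (by positivity)).trans_lt (modulus_spec k N j).2.1

theorem lt_modulus (k N j : ℕ) : k < modulus k N j :=
  Nat.lt_of_succ_lt ((le_max_left _ _).trans_lt (rootScale_lt_modulus k N j))

theorem modulus_le_of_lt {k N j : ℕ} (hj : j < k) : modulus k N j ≤ 2 ^ k * rootScale k N :=
  (modulus_spec k N j).2.2.trans (Nat.mul_le_mul_right _ (Nat.pow_le_pow_right two_pos hj))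

theorem strictMono_modulus (k N : ℕ) : StrictMono (modulus k N) :=
  strictMono_nat_of_lt_succ fun j =>
    (modulus_spec k N j).2.2.trans_lt (modulus_spec k N (j + 1)).2.1

theorem one_le_rpow_one_div {k N : ℕ} (hk : 2 ≤ k) (hN : 1 ≤ N) :
    1 ≤ (N : ℝ) ^ ((1 : ℝ) / ((k : ℝ) - 1)) := by
  have : (2 : ℝ) ≤ k := by exact_mod_cast hk
  exact Real.one_le_rpow (by exact_mod_cast hN) (by rw [one_div_nonneg]; linarith)

theorem rpow_one_div_pow {k : ℕ} (hk : 2 ≤ k) (N : ℕ) :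
    ((N : ℝ) ^ ((1 : ℝ) / ((k : ℝ) - 1))) ^ (k - 1) = N := by
  have : ((k - 1 : ℕ) : ℝ) = (k : ℝ) - 1 := by push_cast [Nat.cast_sub (by omega : 1 ≤ k)]; ring
  rw [← this, one_div, Real.rpow_inv_natCast_pow (Nat.cast_nonneg N) (by omega)]

theorem rpow_one_div_le_rootScale (k N : ℕ) :
    (N : ℝ) ^ ((1 : ℝ) / ((k : ℝ) - 1)) ≤ rootScale k N :=
  (Nat.le_ceil _).trans (Nat.cast_le.2 (le_max_right _ _))

theorem rootScale_le {k N : ℕ} (hk : 2 ≤ k) (hN : 1 ≤ N) :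
    (rootScale k N : ℝ) ≤ (k + 1) * (N : ℝ) ^ ((1 : ℝ) / ((k : ℝ) - 1)) := by
  set x := (N : ℝ) ^ ((1 : ℝ) / ((k : ℝ) - 1))
  have hx : 1 ≤ x := one_le_rpow_one_div hk hN
  have hceil : (⌈x⌉₊ : ℝ) < x + 1 := Nat.ceil_lt_add_one (by linarith)
  have : (2 : ℝ) ≤ k := by exact_mod_cast hk
  rw [rootScale, Nat.cast_max, max_le_iff]
  push_cast
  constructor <;> nlinarith

theorem le_prod_modulus {k N i : ℕ} (hk : 2 ≤ k) (hi : i < k) :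
    N ≤ ∏ j ∈ (range k).erase i, modulus k N j := by
  have hN : N ≤ rootScale k N ^ (k - 1) := by
    have : (N : ℝ) ≤ (rootScale k N : ℝ) ^ (k - 1) :=
      calc (N : ℝ) = ((N : ℝ) ^ ((1 : ℝ) / ((k : ℝ) - 1))) ^ (k - 1) :=
            (rpow_one_div_pow hk N).symm
        _ ≤ (rootScale k N : ℝ) ^ (k - 1) :=
            pow_le_pow_left₀ (by positivity) (rpow_one_div_le_rootScale k N) _
    exact_mod_cast this
  refine hN.trans ?_
  have := pow_card_le_prod ((range k).erase i) (modulus k N) (rootScale k N)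
    fun j _ => (rootScale_lt_modulus k N j).le
  rwa [card_erase_of_mem (mem_range.2 hi), card_range] at this

section Cells

variable (m : ℕ → ℕ) (k N : ℕ)

/-- The part of the `i`-th summand of `∇T_k(g)(a)` coming from the progressions
`(a + (j - i) b)_j` whose `j`-th term lies in the class `γ j` modulo `m j` for every `j ≠ i`. -/
def cellGrad (i : ℕ) (γ : ∀ j ∈ (range k).erase i, ℤ) (g : ℤ → ℝ) (a : ℤ) : ℝ :=
  ∑ b ∈ Icc (-(N : ℤ)) N, ∏ j ∈ ((range k).erase i).attach,
    if a + ((j : ℕ) - (i : ℤ)) * b ≡ γ j j.2 [ZMOD m j] then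
      g (a + ((j : ℕ) - (i : ℤ)) * b)
    else 0

def cells : Finset (Σ i : ℕ, ∀ j ∈ (range k).erase i, ℤ) :=
  (range k).sigma fun i => ((range k).erase i).pi fun j => Ico 0 (m j)

def cellSupport (i : ℕ) (γ : ∀ j ∈ (range k).erase i, ℤ) : Finset ℤ :=
  ((range k).erase i).attach.biUnion fun j => {x ∈ Icc (1 : ℤ) N | x ≡ γ j j.2 [ZMOD m j]}

variable {m k N}

theorem sum_pi_cellGrad (hm : ∀ j, 0 < m j) (i : ℕ) (g : ℤ → ℝ) (a : ℤ) :
    ∑ γ ∈ ((range k).erase i).pi (fun j => Ico (0 : ℤ) (m j)), cellGrad m k N i γ g a =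
      ∑ b ∈ Icc (-(N : ℤ)) N, ∏ j ∈ (range k).erase i, g (a + ((j : ℤ) - i) * b) := by
  unfold cellGrad
  rw [sum_comm]
  refine sum_congr rfl fun b _ => ?_
  rw [← prod_sum ((range k).erase i) (fun j => Ico (0 : ℤ) (m j)) fun j v =>
    if a + ((j : ℤ) - i) * b ≡ v [ZMOD m j] then g (a + ((j : ℤ) - i) * b) else 0]
  exact prod_congr rfl fun j _ => Int.sum_Ico_ite_modEq (by exact_mod_cast hm j) _ _

theorem sum_cells_cellGrad (hm : ∀ j, 0 < m j) (g : ℤ → ℝ) (a : ℤ) :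
    ∑ c ∈ cells m k, cellGrad m k N c.1 c.2 g a = gradTkInt k N g a := by
  rw [cells, sum_sigma, gradTkInt, sum_comm]
  exact sum_congr rfl fun i _ => sum_pi_cellGrad hm i g a

theorem cellGrad_congr {i : ℕ} {γ : ∀ j ∈ (range k).erase i, ℤ} {g g' : ℤ → ℝ}
    (h : ∀ j : (range k).erase i, ∀ x, x ≡ γ j j.2 [ZMOD m j] → g x = g' x) (a : ℤ) :
    cellGrad m k N i γ g a = cellGrad m k N i γ g' a := by
  unfold cellGrad
  refine sum_congr rfl fun b _ => prod_congr rfl fun j _ => ?_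
  split_ifs with hj
  exacts [h j _ hj, rfl]

theorem cellGrad_nonneg {i : ℕ} (γ : ∀ j ∈ (range k).erase i, ℤ) {g : ℤ → ℝ}
    (hg : ∀ x, 0 ≤ g x) (a : ℤ) : 0 ≤ cellGrad m k N i γ g a :=
  sum_nonneg fun b _ => prod_nonneg fun j _ => by split_ifs <;> simp [hg]

/-- The congruences determine `b` modulo `∏ m j ≥ N`, leaving at most three `b ∈ [-N, N]`. -/
theorem card_filter_progression_le_three (hp : ∀ j, (m j).Prime) (hinj : Function.Injective m)
    (hkm : ∀ j, k ≤ m j) {i : ℕ} (hi : i < k) (hN : N ≤ ∏ j ∈ (range k).erase i, m j)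
    (γ : ∀ j ∈ (range k).erase i, ℤ) (a : ℤ) :
    #{b ∈ Icc (-(N : ℤ)) N |
      ∀ j : (range k).erase i, a + ((j : ℕ) - (i : ℤ)) * b ≡ γ j j.2 [ZMOD m j]} ≤ 3 := by
  set S := {b ∈ Icc (-(N : ℤ)) N |
    ∀ j : (range k).erase i, a + ((j : ℕ) - (i : ℤ)) * b ≡ γ j j.2 [ZMOD m j]}
  set M : ℤ := ∏ j ∈ (range k).erase i, (m j : ℤ)
  have hM : 0 < M := prod_pos fun j _ => by exact_mod_cast (hp j).pos
  have hNM : (N : ℤ) ≤ M := by simp only [M]; exact_mod_cast hN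
  have hmod : ∀ b ∈ S, ∀ b' ∈ S, b ≡ b' [ZMOD M] := by
    intro b hb b' hb'
    rw [Int.modEq_iff_dvd]
    refine prod_dvd_of_coprime (fun j _ j' _ hne => Nat.isCoprime_iff_coprime.2
      ((Nat.coprime_primes (hp j) (hp j')).2 (hinj.ne hne))) fun j hj => ?_
    obtain ⟨hji, hjk⟩ : j ≠ i ∧ j < k := by simpa using hj
    have h := ((mem_filter.1 hb).2 ⟨j, hj⟩).trans ((mem_filter.1 hb').2 ⟨j, hj⟩).symm
    dsimp only at h
    have := hkm j
    exact Int.modEq_iff_dvd.1 ((Int.ModEq.add_left_cancel' a h).cancel_left_of_natAbs_lt (hp j)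
      (by omega) (by omega))
  have hcard : #S ≤ _ := Int.card_le_toNat_ediv_add_one_of_modEq hM (filter_subset _ _) hmod
  have : ((N : ℤ) - -N) / M ≤ 2 := Int.ediv_le_of_le_mul hM (by omega)
  change #S ≤ 3
  omega

theorem cellGrad_le_three (hp : ∀ j, (m j).Prime) (hinj : Function.Injective m)
    (hkm : ∀ j, k ≤ m j) {i : ℕ} (hi : i < k) (hN : N ≤ ∏ j ∈ (range k).erase i, m j)
    (γ : ∀ j ∈ (range k).erase i, ℤ) {g : ℤ → ℝ}
    (hg₀ : ∀ x, 0 ≤ g x) (hg₁ : ∀ x, g x ≤ 1) (a : ℤ) : cellGrad m k N i γ g a ≤ 3 := by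
  have hterm : ∀ b, ∏ j ∈ ((range k).erase i).attach,
      (if a + ((j : ℕ) - (i : ℤ)) * b ≡ γ j j.2 [ZMOD m j] then
        g (a + ((j : ℕ) - (i : ℤ)) * b) else 0) ≤
      if ∀ j : (range k).erase i, a + ((j : ℕ) - (i : ℤ)) * b ≡ γ j j.2 [ZMOD m j] then 1
        else 0 := by
    intro b
    split_ifs with hall
    · exact prod_le_one (fun j _ => by split_ifs <;> simp [hg₀])
        fun j _ => by split_ifs <;> simp [hg₁]
    · obtain ⟨j, hj⟩ := not_forall.1 hall
      rw [prod_eq_zero (mem_attach _ j) (if_neg hj)]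
  calc cellGrad m k N i γ g a
      ≤ ∑ b ∈ Icc (-(N : ℤ)) N, if ∀ j : (range k).erase i,
          a + ((j : ℕ) - (i : ℤ)) * b ≡ γ j j.2 [ZMOD m j] then (1 : ℝ) else 0 :=
        sum_le_sum fun b _ => hterm b
    _ ≤ 3 := by
        rw [sum_boole]
        exact_mod_cast card_filter_progression_le_three hp hinj hkm hi hN γ a

theorem card_cellSupport_le {q : ℕ} (hq : 0 < q) (hmq : ∀ j, q ≤ m j) (i : ℕ)
    (γ : ∀ j ∈ (range k).erase i, ℤ) : #(cellSupport m k N i γ) ≤ k * (N / q + 1) :=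
  calc #(cellSupport m k N i γ)
      ≤ ∑ j ∈ ((range k).erase i).attach, #{x ∈ Icc (1 : ℤ) N | x ≡ γ j j.2 [ZMOD m j]} :=
        card_biUnion_le
    _ ≤ ∑ _j ∈ ((range k).erase i).attach, (N / q + 1) := sum_le_sum fun j _ =>
        (Int.card_filter_Icc_modEq_le (hq.trans_le (hmq j)) N _).trans
          (Nat.add_le_add_right (Nat.div_le_div_left (hmq j) hq) 1)
    _ ≤ k * (N / q + 1) := by
        rw [sum_const, card_attach, smul_eq_mul]
        exact Nat.mul_le_mul_right _ (card_erase_le.trans (card_range k).le)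

theorem card_cells_le {B : ℕ} (hB : ∀ j < k, m j ≤ B) : #(cells m k) ≤ k * B ^ (k - 1) :=
  calc #(cells m k) ≤ ∑ _i ∈ range k, B ^ (k - 1) := by
        rw [cells, card_sigma]
        refine sum_le_sum fun i hi => ?_
        rw [card_pi]
        refine (prod_le_pow_card _ _ B fun j hj => ?_).trans_eq (by
          rw [card_erase_of_mem hi, card_range])
        rw [Int.card_Ico, sub_zero, Int.toNat_natCast]
        exact hB j (mem_range.1 (mem_of_mem_erase hj))
    _ = k * B ^ (k - 1) := by rw [sum_const, card_range, smul_eq_mul]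

theorem eq_ite_mem_filter_cellSupport {f : ℤ → ℝ} (hf01 : ∀ x, f x = 0 ∨ f x = 1)
    (hsupp : ∀ x, x ∉ Icc (1 : ℤ) N → f x = 0) {i : ℕ} {γ : ∀ j ∈ (range k).erase i, ℤ}
    (j : (range k).erase i) {x : ℤ} (hx : x ≡ γ j j.2 [ZMOD m j]) :
    f x = if x ∈ {y ∈ cellSupport m k N i γ | f y = 1} then 1 else 0 := by
  by_cases hxN : x ∈ Icc (1 : ℤ) N
  · have hxS : x ∈ cellSupport m k N i γ :=
      mem_biUnion.2 ⟨j, mem_attach _ _, mem_filter.2 ⟨hxN, hx⟩⟩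
    rcases hf01 x with h | h <;> simp [h, hxS]
  · rw [hsupp x hxN, if_neg fun hS => hxN ?_]
    obtain ⟨j', -, hj'⟩ := mem_biUnion.1 (mem_filter.1 hS).1
    exact (mem_filter.1 hj').1

end Cells

def cellConst (k : ℕ) : ℕ := k * (2 ^ k * (k + 1)) ^ (k - 1)

theorem cellConst_pos {k : ℕ} (hk : 1 ≤ k) : 0 < cellConst k := by
  unfold cellConst
  positivity

theorem card_cells_modulus_le {k N : ℕ} (hk : 2 ≤ k) (hN : 1 ≤ N) :
    (#(cells (modulus k N) k) : ℝ) ≤ cellConst k * N := by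
  set x := (N : ℝ) ^ ((1 : ℝ) / ((k : ℝ) - 1))
  have hcard := card_cells_le (m := modulus k N) fun j hj => modulus_le_of_lt hj
  calc (#(cells (modulus k N) k) : ℝ) ≤ k * (2 ^ k * rootScale k N : ℝ) ^ (k - 1) := by
        exact_mod_cast hcard
    _ ≤ k * (2 ^ k * ((k + 1) * x)) ^ (k - 1) := by gcongr; exact rootScale_le hk hN
    _ = k * (2 ^ k * (k + 1)) ^ (k - 1) * x ^ (k - 1) := by
        rw [← mul_assoc, mul_pow]; ring
    _ = cellConst k * N := by rw [rpow_one_div_pow hk N, cellConst]; push_cast; ring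

def cellVector (k N : ℕ) (c : Σ i : ℕ, ∀ j ∈ (range k).erase i, ℤ) (A : Finset ℤ) :
    Icc (1 : ℤ) N → ℝ :=
  fun a =>
    cellConst k * cellGrad (modulus k N) k N c.1 c.2 (fun x => if x ∈ A then 1 else 0) a

/-- Since `#cells ≤ cellConst k * N`, the decomposition `∇T_k(f) = ∑_c cellGrad c f` exhibits
`∇T_k(f) / N` as a combination of these vectors with weights `(cellConst k * N)⁻¹` of total mass
at most one; the vector `0` absorbs the rest. -/
def catalog (k N : ℕ) : Finset (Icc (1 : ℤ) N → ℝ) :=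
  insert 0 (((cells (modulus k N) k).sigma fun c =>
    (cellSupport (modulus k N) k N c.1 c.2).powerset).image fun p => cellVector k N p.1 p.2)

theorem zero_mem_catalog (k N : ℕ) : 0 ∈ catalog k N := mem_insert_self _ _

theorem cellVector_mem_catalog {k N : ℕ} {c : Σ i : ℕ, ∀ j ∈ (range k).erase i, ℤ}
    (hc : c ∈ cells (modulus k N) k) {A : Finset ℤ}
    (hA : A ⊆ cellSupport (modulus k N) k N c.1 c.2) : cellVector k N c A ∈ catalog k N :=
  mem_insert_of_mem (mem_image.2 ⟨⟨c, A⟩, mem_sigma.2 ⟨hc, mem_powerset.2 hA⟩, rfl⟩)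

theorem abs_le_of_mem_catalog {k N : ℕ} (hk : 2 ≤ k) {v : Icc (1 : ℤ) N → ℝ}
    (hv : v ∈ catalog k N) (a : Icc (1 : ℤ) N) : |v a| ≤ 3 * cellConst k := by
  rcases mem_insert.1 hv with rfl | hv
  · simp
  obtain ⟨⟨c, A⟩, hcA, rfl⟩ := mem_image.1 hv
  have hi : c.1 < k := mem_range.1 (mem_sigma.1 (mem_sigma.1 hcA).1).1
  have hA₀ : ∀ x, 0 ≤ (if x ∈ A then 1 else 0 : ℝ) := fun x => by split_ifs <;> norm_num
  have hA₁ : ∀ x, (if x ∈ A then 1 else 0 : ℝ) ≤ 1 := fun x => by split_ifs <;> norm_num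
  rw [cellVector, abs_of_nonneg (mul_nonneg (Nat.cast_nonneg _) (cellGrad_nonneg _ hA₀ _)),
    mul_comm]
  exact mul_le_mul_of_nonneg_right (cellGrad_le_three (modulus_prime k N)
    (strictMono_modulus k N).injective (fun j => (lt_modulus k N j).le) hi
    (le_prod_modulus hk hi) _ hA₀ hA₁ a) (Nat.cast_nonneg _)

theorem card_catalog_le (k N : ℕ) :
    #(catalog k N) ≤ 1 + #(cells (modulus k N) k) * 2 ^ (k * (N / rootScale k N + 1)) :=
  calc #(catalog k N)
      ≤ #((cells (modulus k N) k).sigma fun c =>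
          (cellSupport (modulus k N) k N c.1 c.2).powerset) + 1 :=
        (card_insert_le _ _).trans (Nat.add_le_add_right card_image_le 1)
    _ ≤ (∑ _c ∈ cells (modulus k N) k, 2 ^ (k * (N / rootScale k N + 1))) + 1 := by
        rw [card_sigma]
        gcongr with c
        rw [card_powerset]
        exact Nat.pow_le_pow_right two_pos
          (card_cellSupport_le (rootScale_pos k N) (fun j => (rootScale_lt_modulus k N j).le)
            _ _)
    _ = _ := by rw [sum_const, smul_eq_mul, add_comm]

theorem card_catalog_le_exp {k N : ℕ} (hk : 3 ≤ k) (hN : 1 ≤ N) :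
    (#(catalog k N) : ℝ) ≤
      Real.exp ((cellConst k + 2 * k + 3) * (N : ℝ) ^ (1 - 1 / ((k : ℝ) - 1))) := by
  have hdiv : ((N / rootScale k N : ℕ) : ℝ) ≤ (N : ℝ) ^ (1 - 1 / ((k : ℝ) - 1)) :=
    calc ((N / rootScale k N : ℕ) : ℝ) ≤ N / (rootScale k N : ℝ) := Nat.cast_div_le
      _ ≤ N / (N : ℝ) ^ ((1 : ℝ) / ((k : ℝ) - 1)) := div_le_div_of_nonneg_left (by positivity)
          (by positivity) (rpow_one_div_le_rootScale k N)
      _ = (N : ℝ) ^ (1 - 1 / ((k : ℝ) - 1)) := by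
          rw [Real.rpow_sub (by positivity), Real.rpow_one]
  set X := (N : ℝ) ^ (1 - 1 / ((k : ℝ) - 1))
  set E := k * (N / rootScale k N + 1)
  have hk' : (3 : ℝ) ≤ k := by exact_mod_cast hk
  have hα : 1 / 2 ≤ 1 - 1 / ((k : ℝ) - 1) := by
    have : 1 / ((k : ℝ) - 1) ≤ 1 / 2 := one_div_le_one_div_of_le (by norm_num) (by linarith)
    linarith
  have hN' : (1 : ℝ) ≤ N := by exact_mod_cast hN
  have hX : 1 ≤ X := Real.one_le_rpow hN' (by linarith)
  have hE : (E : ℝ) ≤ 2 * k * X := by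
    simp only [E]
    push_cast
    nlinarith
  have hlogN : Real.log N ≤ 2 * X :=
    (Real.log_le_rpow_div (ε := 1 - 1 / ((k : ℝ) - 1)) (by positivity) (by linarith)).trans (by
      rw [div_le_iff₀ (by linarith)]; nlinarith)
  have hcells := card_cells_modulus_le (k := k) (by omega) hN
  have hC : (1 : ℝ) ≤ cellConst k := by exact_mod_cast cellConst_pos (by omega : 1 ≤ k)
  have h2E : (1 : ℝ) ≤ 2 ^ E := one_le_pow₀ (by norm_num)
  calc (#(catalog k N) : ℝ) ≤ 1 + #(cells (modulus k N) k) * 2 ^ E := by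
        exact_mod_cast card_catalog_le k N
    _ ≤ 2 * cellConst k * N * 2 ^ E := by
        have := mul_le_mul_of_nonneg_right hcells (by positivity : (0 : ℝ) ≤ 2 ^ E)
        have := one_le_mul_of_one_le_of_one_le (one_le_mul_of_one_le_of_one_le hC hN') h2E
        linarith
    _ ≤ Real.exp X * Real.exp (cellConst k * X) * Real.exp (2 * X) *
          Real.exp (2 * k * X) := by
        gcongr
        · linarith [Real.add_one_le_exp X]
        · linarith [Real.add_one_le_exp (cellConst k * X), le_mul_of_one_le_right
            (by positivity : (0 : ℝ) ≤ cellConst k) hX]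
        · rw [← Real.exp_log (by positivity : (0 : ℝ) < N)]
          exact Real.exp_le_exp.2 hlogN
        · calc (2 : ℝ) ^ E ≤ Real.exp 1 ^ E := by
                gcongr; linarith [Real.add_one_le_exp 1]
            _ = Real.exp E := by rw [← Real.exp_nat_mul, mul_one]
            _ ≤ Real.exp (2 * k * X) := Real.exp_le_exp.2 hE
    _ = Real.exp ((cellConst k + 2 * k + 3) * X) := by
        simp only [← Real.exp_add]
        ring_nf

theorem grad_div_mem_convexHull_catalog {k N : ℕ} (hk : 2 ≤ k) (hN : 1 ≤ N) {f : ℤ → ℝ}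
    (hf01 : ∀ x, f x = 0 ∨ f x = 1) (hsupp : ∀ x, x ∉ Icc (1 : ℤ) N → f x = 0) :
    (fun a : Icc (1 : ℤ) N => gradTkInt k N f a / N) ∈
      convexHull ℝ (catalog k N : Set (Icc (1 : ℤ) N → ℝ)) := by
  have hC : (0 : ℝ) < cellConst k := by exact_mod_cast cellConst_pos (by omega : 1 ≤ k)
  have hL : (0 : ℝ) < cellConst k * N := by positivity
  have hrepr : (fun a : Icc (1 : ℤ) N => gradTkInt k N f a / N) =
      ∑ c ∈ cells (modulus k N) k, ((cellConst k : ℝ) * N)⁻¹ •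
        cellVector k N c {x ∈ cellSupport (modulus k N) k N c.1 c.2 | f x = 1} := by
    funext a
    simp only [Finset.sum_apply, Pi.smul_apply, smul_eq_mul, cellVector]
    rw [← sum_cells_cellGrad (fun j => (modulus_prime k N j).pos) f a, sum_div]
    refine sum_congr rfl fun c _ => ?_
    rw [← cellGrad_congr (fun j x hx => eq_ite_mem_filter_cellSupport hf01 hsupp j hx) a]
    field_simp
  rw [hrepr]
  refine sum_smul_mem_convexHull_of_zero_mem (w := fun _ => ((cellConst k : ℝ) * N)⁻¹)
    (z := fun c => cellVector k N c {x ∈ cellSupport (modulus k N) k N c.1 c.2 | f x = 1})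
    (zero_mem_catalog k N) (fun _ _ => by positivity) ?_ fun c hc => ?_
  · rw [sum_const, nsmul_eq_mul, ← div_eq_mul_inv, div_le_one hL]
    exact card_cells_modulus_le hk hN
  · exact cellVector_mem_catalog hc (filter_subset _ _)

end GradTk

open GradTk

/-- For fixed k ≥ 3, the set of normalized gradients (1/N)·∇T_k(f) over
f : [N] → {0,1} is contained in the convex hull of a set S of uniformly bounded
functions on [N] with |S| ≤ exp(O(N^{1−1/(k−1)})). -/
theorem grad_hull_small (k : ℕ) (hk : 3 ≤ k) :
    ∃ C : ℝ, 0 < C ∧ ∀ N : ℕ, 2 ≤ N →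
      ∃ S : Set ((Finset.Icc (1 : ℤ) (N : ℤ)) → ℝ), S.Finite ∧
        (∀ v ∈ S, ∀ a, |v a| ≤ C) ∧
        (S.ncard : ℝ) ≤ Real.exp (C * (N : ℝ) ^ (1 - 1 / ((k : ℝ) - 1))) ∧
        ∀ f : ℤ → ℝ, (∀ x, f x = 0 ∨ f x = 1) →
          (∀ x, x ∉ Finset.Icc (1 : ℤ) (N : ℤ) → f x = 0) →
          (fun a : (Finset.Icc (1 : ℤ) (N : ℤ)) => gradTkInt k N f a / N) ∈
            convexHull ℝ S := by
  refine ⟨3 * cellConst k + 2 * k + 3, by positivity, fun N hN => ⟨catalog k N,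
    (catalog k N).finite_toSet, fun v hv a => ?_, ?_,
    fun f hf01 hsupp => grad_div_mem_convexHull_catalog (by omega) (by omega) hf01 hsupp⟩⟩
  · have := abs_le_of_mem_catalog (by omega) hv a
    linarith [(Nat.cast_nonneg k : (0 : ℝ) ≤ k)]
  · rw [Set.ncard_coe_finset]
    refine (card_catalog_le_exp hk (by omega)).trans (Real.exp_le_exp.2 ?_)
    gcongr
    linarith [(Nat.cast_nonneg (cellConst k) : (0 : ℝ) ≤ cellConst k)]

end
end

section
/- Let k ≥ 3 be an integer and N a positive integer. Let Ã ⊆ ℤ be a finite set contained in the open interval (−N/4, N/4), and let A ⊆ ℤ/Nℤ be the image of Ã under the natural projection ℤ → ℤ/Nℤ. Then T_k(A) = T_k(Ã). -/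
noncomputable section

/-- Number of pairs (a,b) of integers with a, a+b, ..., a+(k-1)b all in A. -/
def TkZ (k : ℕ) (A : Set ℤ) : ℕ :=
  Set.ncard {x : ℤ × ℤ | ∀ j : ℕ, j < k → x.1 + (j : ℤ) * x.2 ∈ A}

/-- Number of pairs (a,b) in (ℤ/Nℤ)² with a, a+b, ..., a+(k-1)b all in A. -/
def TkZMod (k : ℕ) {N : ℕ} (A : Set (ZMod N)) : ℕ :=
  Set.ncard {x : ZMod N × ZMod N | ∀ j : ℕ, j < k → x.1 + (j : ZMod N) * x.2 ∈ A}

/-- Rectification: if Ã ⊆ (−N/4, N/4) ∩ ℤ is finite and A is its image in ℤ/Nℤ,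
then T_k(A) = T_k(Ã). -/
theorem rectification (k N : ℕ) (hk : 3 ≤ k) (hN : 0 < N) (Atilde : Set ℤ)
    (hfin : Atilde.Finite) (hbound : ∀ a ∈ Atilde, 4 * |a| < (N : ℤ)) :
    TkZMod k ((fun n : ℤ => (n : ZMod N)) '' Atilde) = TkZ k Atilde := by
  classical
  set φ : ℤ × ℤ → ZMod N × ZMod N := fun x => ((x.1 : ZMod N), (x.2 : ZMod N)) with hφ
  set S : Set (ℤ × ℤ) := {x : ℤ × ℤ | ∀ j : ℕ, j < k → x.1 + (j : ℤ) * x.2 ∈ Atilde} with hS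
  set SZ : Set (ZMod N × ZMod N) :=
    {x : ZMod N × ZMod N | ∀ j : ℕ, j < k →
      x.1 + (j : ZMod N) * x.2 ∈ (fun n : ℤ => (n : ZMod N)) '' Atilde} with hSZ
  -- key cancellation lemma
  have key : ∀ a b : ℤ, ((a : ZMod N) = (b : ZMod N)) → |a - b| < N → a = b := by
    intro a b hab habs
    have hdvd : (N : ℤ) ∣ b - a := ((ZMod.intCast_eq_intCast_iff _ _ _).mp hab).dvd
    have := Int.eq_zero_of_abs_lt_dvd hdvd (by rw [abs_sub_comm]; exact habs)
    omega
  have hinj : Set.InjOn φ S := by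
    rintro ⟨a, b⟩ ha ⟨a', b'⟩ ha' heq
    have h1 : (a : ZMod N) = (a' : ZMod N) := congrArg Prod.fst heq
    have haA : a ∈ Atilde := by simpa using ha 0 (by omega)
    have haA' : a' ∈ Atilde := by simpa using ha' 0 (by omega)
    have hba : a + b ∈ Atilde := by simpa using ha 1 (by omega)
    have hba' : a' + b' ∈ Atilde := by simpa using ha' 1 (by omega)
    have hsnd : (b : ZMod N) = (b' : ZMod N) := congrArg Prod.snd heq
    have h2 : ((a + b : ℤ) : ZMod N) = ((a' + b' : ℤ) : ZMod N) := by
      push_cast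
      rw [h1, hsnd]
    have b1 := hbound a haA
    have b2 := hbound a' haA'
    have b3 := hbound _ hba
    have b4 := hbound _ hba'
    have e1 : a = a' := key a a' h1 (by
      rcases abs_cases a with ⟨h, _⟩ | ⟨h, _⟩ <;> rcases abs_cases a' with ⟨h', _⟩ | ⟨h', _⟩ <;>
        rcases abs_cases (a - a') with ⟨h'', _⟩ | ⟨h'', _⟩ <;> omega)
    have e2 : a + b = a' + b' := key _ _ h2 (by
      rcases abs_cases (a + b) with ⟨h, _⟩ | ⟨h, _⟩ <;>
        rcases abs_cases (a' + b') with ⟨h', _⟩ | ⟨h', _⟩ <;>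
        rcases abs_cases (a + b - (a' + b')) with ⟨h'', _⟩ | ⟨h'', _⟩ <;> omega)
    have : b = b' := by omega
    simp [e1, this]
  have himg : φ '' S = SZ := by
    apply Set.Subset.antisymm
    · rintro _ ⟨⟨a, b⟩, hab, rfl⟩
      intro j hj
      exact ⟨a + (j : ℤ) * b, hab j hj, by push_cast; ring⟩
    · rintro ⟨α, β⟩ hαβ
      obtain ⟨a0, ha0, ha0e⟩ := hαβ 0 (by omega)
      obtain ⟨a1, ha1, ha1e⟩ := hαβ 1 (by omega)
      simp only at ha0e ha1e
      have hα : (a0 : ZMod N) = α := by simpa using ha0e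
      set b : ℤ := a1 - a0 with hb
      have ha1e' : (a1 : ZMod N) = α + β := by simpa using ha1e
      have hβ : (b : ZMod N) = β := by
        rw [hb]
        push_cast
        rw [hα, ha1e']
        ring
      have hcast : ∀ j : ℕ, ((a0 + (j : ℤ) * b : ℤ) : ZMod N) = α + (j : ZMod N) * β := by
        intro j
        push_cast
        rw [hα, hβ]
      have main : ∀ j : ℕ, j < k → a0 + (j : ℤ) * b ∈ Atilde := by
        intro j
        induction j using Nat.strong_induction_on with
        | _ j ih =>
          intro hj
          match j with
          | 0 => simpa using ha0
          | 1 =>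
            have e : a0 + ((1 : ℕ) : ℤ) * b = a1 := by rw [hb]; push_cast; ring
            rw [e]; exact ha1
          | (m + 2) =>
            have hm : a0 + (m : ℤ) * b ∈ Atilde := ih m (by omega) (by omega)
            have hm1 : a0 + ((m : ℤ) + 1) * b ∈ Atilde := by
              have := ih (m + 1) (by omega) (by omega)
              push_cast at this
              exact this
            obtain ⟨c, hc, hce⟩ := hαβ (m + 2) hj
            simp only at hce
            have hceq : ((a0 + ((m : ℕ) + 2 : ℤ) * b : ℤ) : ZMod N) = (c : ZMod N) := by
              rw [hce]
              have := hcast (m + 2)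
              push_cast at this ⊢
              rw [this]
            have b1 := hbound _ hm
            have b2 := hbound _ hm1
            have b3 := hbound _ hc
            have heq : a0 + ((m : ℕ) + 2 : ℤ) * b = c := by
              apply key _ _ hceq
              have hlin : a0 + ((m : ℕ) + 2 : ℤ) * b =
                  2 * (a0 + ((m : ℤ) + 1) * b) - (a0 + (m : ℤ) * b) := by push_cast; ring
              rcases abs_cases (a0 + (m : ℤ) * b) with ⟨h, _⟩ | ⟨h, _⟩ <;>
                rcases abs_cases (a0 + ((m : ℤ) + 1) * b) with ⟨h', _⟩ | ⟨h', _⟩ <;>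
                rcases abs_cases c with ⟨h'', _⟩ | ⟨h'', _⟩ <;>
                rcases abs_cases (a0 + ((m : ℕ) + 2 : ℤ) * b - c) with ⟨h''', _⟩ | ⟨h''', _⟩ <;>
                omega
            push_cast
            rw [heq]; exact hc
      refine ⟨(a0, b), main, ?_⟩
      simp only [hφ, Prod.mk.injEq]
      exact ⟨hα, hβ⟩
  have h1 : TkZMod k ((fun n : ℤ => (n : ZMod N)) '' Atilde) = SZ.ncard := rfl
  have h2 : TkZ k Atilde = S.ncard := rfl
  rw [h1, h2, ← himg, Set.ncard_image_of_injOn hinj]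

end
end
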